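/- arXiv:0811.0289 — 3 statements merged into one kernel-verified Lean document; each statement's English description precedes it below -/
import Mathlib

section
/- Let A be a symmetric n×n real matrix with rows w_1,…,w_n, each of Euclidean norm at least 1, and suppose the normalized inner products satisfy |⟨w_i,w_j⟩|/(‖w_i‖‖w_j‖) ≤ c₁ j^{-δ} for all i < j, where δ > 5/4. If the constant c₁ is small enough (explicitly, if 1 − c₁²/4^δ − c₁c₂ · 2^{5/2−2δ}/(2δ−5/2) > 0 with c₂ = c₁ exp((15/6)c₁²)), then |det A| ≥ q ∏_{j=1}^n ‖w_j‖ for some q ∈ (0,1) independent of n. -/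
/-!
Normalize the rows of `A` to unit length, giving a matrix `N` with `|det A| = |det N| ∏ ‖w_j‖`.
The Gram matrix `B = N Nᵀ` has unit diagonal, and the decay hypothesis bounds
`∑_{i ≠ j} B_ij²` by a constant `r` independent of `n`; the smallness condition gives `r < 1`.
Hence the eigenvalues of `B` are `1 + μ_i` with `∑ μ_i = 0` and `∑ μ_i² ≤ r`, so `|μ_i| ≤ √r < 1`,
and `log (1 + μ) ≥ μ - μ² / (1 - √r)` gives `det N ^ 2 = det B = ∏ (1 + μ_i) ≥ exp (-r / (1 - √r))`.
-/

open Finset Real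

lemma sub_sq_div_one_sub_le_log_one_add {s x : ℝ} (hs : s < 1) (hx : |x| ≤ s) :
    x - x ^ 2 / (1 - s) ≤ log (1 + x) := by
  have hsx : 1 - s ≤ 1 + x := by linarith [neg_abs_le x]
  have hx1 : 0 < 1 + x := by linarith
  calc x - x ^ 2 / (1 - s) ≤ x - x ^ 2 / (1 + x) := by gcongr
    _ = 1 - (1 + x)⁻¹ := by field_simp; ring
    _ ≤ log (1 + x) := one_sub_inv_le_log_of_pos hx1

lemma exp_neg_div_le_prod_one_add {ι : Type*} [Fintype ι] {r : ℝ} (hr : r < 1) (μ : ι → ℝ)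
    (hsum : ∑ i, μ i = 0) (hsq : ∑ i, μ i ^ 2 ≤ r) :
    exp (-(r / (1 - √r))) ≤ ∏ i, (1 + μ i) := by
  have hs : √r < 1 := (sqrt_lt' one_pos).2 (by rwa [one_pow])
  have hμ : ∀ i, |μ i| ≤ √r := fun i =>
    abs_le_sqrt ((single_le_sum (fun j _ => sq_nonneg (μ j)) (mem_univ i)).trans hsq)
  have hpos : ∀ i, 0 < 1 + μ i := fun i => by linarith [neg_abs_le (μ i), hμ i]
  calc exp (-(r / (1 - √r))) ≤ exp (∑ i, (μ i - μ i ^ 2 / (1 - √r))) := by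
        rw [sum_sub_distrib, hsum, ← sum_div, zero_sub]
        gcongr
    _ ≤ exp (∑ i, log (1 + μ i)) := by
        gcongr with i
        exact sub_sq_div_one_sub_le_log_one_add hs (hμ i)
    _ = ∏ i, (1 + μ i) := by
        rw [exp_sum]
        exact prod_congr rfl fun i _ => exp_log (hpos i)

namespace Matrix.IsHermitian

variable {ι : Type*} [Fintype ι] [DecidableEq ι] {A : Matrix ι ι ℝ}

lemma trace_mul_self_eq_sum_sq_eigenvalues (hA : A.IsHermitian) :
    (A * A).trace = ∑ i, hA.eigenvalues i ^ 2 := by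
  conv_lhs => rw [hA.spectral_theorem, ← map_mul, Unitary.conjStarAlgAut_apply, trace_mul_cycle,
    Unitary.coe_star_mul_self, one_mul, diagonal_mul_diagonal, trace_diagonal]
  simp [sq]

lemma exp_neg_div_le_det (hA : A.IsHermitian) {r : ℝ} (hr : r < 1)
    (htr : A.trace = Fintype.card ι) (htr_sq : (A * A).trace ≤ Fintype.card ι + r) :
    Real.exp (-(r / (1 - √r))) ≤ A.det := by
  set ev := hA.eigenvalues
  have hsum : ∑ i, ev i = Fintype.card ι := by
    simpa [hA.trace_eq_sum_eigenvalues] using htr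
  have hsq : ∑ i, ev i ^ 2 ≤ Fintype.card ι + r := by
    rwa [← hA.trace_mul_self_eq_sum_sq_eigenvalues]
  have hdet : A.det = ∏ i, (1 + (ev i - 1)) := by
    simp [hA.det_eq_prod_eigenvalues, ev]
  rw [hdet]
  refine exp_neg_div_le_prod_one_add hr _ ?_ ?_
  · simp [sum_sub_distrib, hsum]
  · have : ∑ i, (ev i - 1) ^ 2 = ∑ i, ev i ^ 2 - 2 * ∑ i, ev i + Fintype.card ι := by
      simp [sub_sq, sum_add_distrib, sum_sub_distrib, mul_sum]
    linarith

end Matrix.IsHermitian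

lemma sum_range_mul_add_one_rpow_neg_le {p : ℝ} (hp : 2 < p) (n : ℕ) :
    ∑ j ∈ range n, (j : ℝ) * ((j : ℝ) + 1) ^ (-p) ≤ 2 ^ (-p) + 2 ^ (2 - p) / (p - 2) := by
  set f : ℕ → ℝ := fun j => (j : ℝ) * ((j : ℝ) + 1) ^ (-p)
  have hf : ∀ j, 0 ≤ f j := fun j => by positivity
  have hf_le : ∀ j : ℕ, f j ≤ ((j : ℝ) + 1) ^ (1 - p) := fun j => by
    rw [show 1 - p = 1 + -p by ring, rpow_add (by positivity), rpow_one]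
    exact mul_le_mul_of_nonneg_right (by linarith) (by positivity)
  have hanti : AntitoneOn (fun x : ℝ => x ^ (1 - p)) (Set.Icc 2 (2 + n)) :=
    fun x hx y _ hxy => rpow_le_rpow_of_nonpos (by linarith [hx.1]) hxy (by linarith)
  have hint : ∫ x in (2 : ℝ)..2 + n, x ^ (1 - p) ≤ 2 ^ (2 - p) / (p - 2) := by
    rw [integral_rpow (Or.inr ⟨by linarith, by simp⟩), show 1 - p + 1 = 2 - p by ring,
      ← neg_sub (2 : ℝ) p, div_neg, ← neg_div]
    have : 0 ≤ (2 + (n : ℝ)) ^ (2 - p) := by positivity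
    exact div_le_div_of_nonpos_of_le (by linarith) (by linarith)
  calc ∑ j ∈ range n, f j ≤ ∑ j ∈ range (n + 2), f j :=
        sum_le_sum_of_subset_of_nonneg (range_subset_range.2 (by omega)) fun j _ _ => hf j
    _ = ∑ i ∈ range n, f (i + 2) + 2 ^ (-p) := by
        rw [sum_range_succ', sum_range_succ', add_assoc]
        congr 1
        norm_num [f]
    _ ≤ (∫ x in (2 : ℝ)..2 + n, x ^ (1 - p)) + 2 ^ (-p) := by
        gcongr
        refine (sum_le_sum fun i _ => hf_le (i + 2)).trans (le_of_eq_of_le ?_ hanti.sum_le_integral)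
        push_cast; ring_nf
    _ ≤ 2 ^ (-p) + 2 ^ (2 - p) / (p - 2) := by linarith

/-- Bounds `∑_{i ≠ j} (c (max i j + 1) ^ (-δ)) ^ 2 = 2 c² ∑_j j (j + 1) ^ (-2δ)` uniformly in the
dimension: the term `j = 1` gives `2 ^ (-2δ)`, the tail is compared with `∫_2^∞ x ^ (1 - 2δ) dx`. -/
noncomputable def offDiagMass (c δ : ℝ) : ℝ :=
  2 * c ^ 2 * (2 ^ (-(2 * δ)) + 2 ^ (2 - 2 * δ) / (2 * δ - 2))

lemma offDiagMass_pos {c δ : ℝ} (hc : c ≠ 0) (hδ : 1 < δ) : 0 < offDiagMass c δ := by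
  have : 0 < 2 * δ - 2 := by linarith
  unfold offDiagMass
  positivity

lemma offDiagMass_eq {c δ : ℝ} (hδ : δ ≠ 1) :
    offDiagMass c δ = 2 * (c ^ 2 * 2 ^ (-(2 * δ))) * (δ + 1) / (δ - 1) := by
  have h2 : (2 : ℝ) ^ (2 - 2 * δ) = 4 * 2 ^ (-(2 * δ)) := by
    rw [sub_eq_add_neg, rpow_add two_pos]; norm_num
  have : δ - 1 ≠ 0 := sub_ne_zero.2 hδ
  rw [offDiagMass, h2]
  field_simp
  ring

lemma one_add_half_le_two_rpow {u : ℝ} (hu : 0 ≤ u) : 1 + u / 2 ≤ (2 : ℝ) ^ u := by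
  rw [rpow_def_of_pos two_pos]
  nlinarith [add_one_le_exp (log 2 * u), log_two_gt_d9]

lemma two_mul_mul_lt_of_mul_add_mul_lt {u v s t E : ℝ} (hu : 0 < u) (hv : 0 ≤ v) (hs : 4 ≤ s)
    (ht : 1 + u / 2 ≤ t) (hE : 1 + 5 / 2 * (v * (t * s)) ≤ E) (h : v * u + v * E * s < u) :
    2 * v * (u + 9 / 2) < u + 1 / 2 := by
  have hst : 4 ^ 2 * (1 + u / 2) ≤ s ^ 2 * t :=
    mul_le_mul (pow_le_pow_left₀ (by norm_num) hs 2) ht (by positivity) (by positivity)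
  have hvEs : 4 * v + 40 * v ^ 2 * (1 + u / 2) ≤ v * E * s := by
    nlinarith [mul_le_mul_of_nonneg_left hs hv, mul_le_mul_of_nonneg_left hst (sq_nonneg v),
      mul_le_mul_of_nonneg_left hE (by positivity : 0 ≤ v * s)]
  nlinarith [mul_nonneg hu.le hv, mul_nonneg (mul_nonneg hu.le hv) hv, sq_nonneg (v - 1 / 4)]

lemma offDiagMass_lt_one {c δ : ℝ} (hδ : 5 / 4 < δ)
    (hsmall : 0 < 1 - c ^ 2 / (4 : ℝ) ^ δ - c * (c * exp ((15 / 6) * c ^ 2)) *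
      (2 : ℝ) ^ ((5 : ℝ) / 2 - 2 * δ) / (2 * δ - 5 / 2)) :
    offDiagMass c δ < 1 := by
  -- The exponential matters only through `exp x ≥ 1 + x`: as `c² = v 2 ^ (2δ)` with
  -- `v = c² 2 ^ (-2δ)`, it keeps `v` small when `δ` is large.
  have hE : 1 + 5 / 2 * c ^ 2 ≤ exp ((15 / 6) * c ^ 2) := by
    linarith [add_one_le_exp ((15 / 6) * c ^ 2)]
  set E := exp ((15 / 6) * c ^ 2)
  set u := 2 * δ - 5 / 2 with hu_def
  have hu : 0 < u := by linarith
  set w : ℝ := 2 ^ (-(2 * δ))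
  set s : ℝ := 2 ^ ((5 : ℝ) / 2)
  set t : ℝ := 2 ^ u
  set v := c ^ 2 * w
  have hv : 0 ≤ v := by positivity
  have hs : 4 ≤ s := by
    have := rpow_le_rpow_of_exponent_le (x := 2) one_le_two (show (2 : ℝ) ≤ 5 / 2 by norm_num)
    norm_num at this
    exact this
  have hwts : w * (t * s) = 1 := by
    rw [← rpow_add two_pos, ← rpow_add two_pos, hu_def]
    ring_nf
    exact rpow_zero 2
  have h4 : (4 : ℝ) ^ δ = w⁻¹ := by
    rw [← rpow_neg zero_le_two, neg_neg, show (4 : ℝ) = 2 ^ 2 by norm_num,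
      ← rpow_natCast_mul zero_le_two]
    norm_num
  have hsw : (2 : ℝ) ^ ((5 : ℝ) / 2 - 2 * δ) = s * w := by
    rw [← rpow_add two_pos]; ring_nf
  have hsmall' : v * u + v * E * s < u := by
    have e : c ^ 2 / w⁻¹ + c * (c * E) * (s * w) / u = (v * u + v * E * s) / u := by
      field_simp
      ring
    rwa [h4, hsw, sub_sub, e, sub_pos, div_lt_one hu] at hsmall
  have hc : c ^ 2 = v * (t * s) := by rw [mul_assoc, hwts, mul_one]
  have key := two_mul_mul_lt_of_mul_add_mul_lt hu hv hs (one_add_half_le_two_rpow hu.le)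
    (hc ▸ hE) hsmall'
  rw [offDiagMass_eq (by linarith), div_lt_one (by linarith)]
  change 2 * v * (δ + 1) < δ - 1
  linear_combination key / 2

lemma Matrix.IsSymm.trace_mul_self_le {n : ℕ} {B : Matrix (Fin n) (Fin n) ℝ} (hB : B.IsSymm)
    (hdiag : ∀ i, B i i = 1) (β : ℕ → ℝ) (hoff : ∀ i j : Fin n, i < j → B i j ^ 2 ≤ β j) :
    (B * B).trace ≤ n + 2 * ∑ j ∈ range n, j * β j := by
  have hpair : ∀ i j, B i j * B j i ≤
      (if i = j then 1 else 0) + (if i < j then β j else 0) + (if j < i then β i else 0) := by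
    intro i j
    rcases lt_trichotomy i j with h | rfl | h
    · simpa [h, h.ne, h.not_gt, hB.apply i j, sq] using hoff i j h
    · simp [hdiag]
    · simpa [h, h.ne', h.not_gt, hB.apply i j, sq] using hoff j i h
  have hcount : ∀ j : Fin n, ∑ i, (if i < j then β j else 0) = j * β j := fun j => by
    rw [sum_ite, sum_const_zero, add_zero, sum_const, filter_gt_eq_Iio, Fin.card_Iio, nsmul_eq_mul]
  calc (B * B).trace = ∑ i : Fin n, ∑ j : Fin n, B i j * B j i := by
        simp [Matrix.trace, Matrix.mul_apply]
    _ ≤ ∑ i : Fin n, ∑ j : Fin n, ((if i = j then 1 else 0) + (if i < j then β j else 0) +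
          (if j < i then β i else 0)) := by gcongr with i _ j _; exact hpair i j
    _ = n + 2 * ∑ j : Fin n, ((j : ℕ) : ℝ) * β j := by
        simp only [sum_add_distrib, sum_ite_eq, mem_univ, if_true, hcount]
        rw [sum_comm]
        simp only [hcount, sum_const, card_univ, Fintype.card_fin, nsmul_one]
        ring
    _ = n + 2 * ∑ j ∈ range n, j * β j := by rw [Fin.sum_univ_eq_sum_range (fun j => (j : ℝ) * β j)]

lemma Matrix.IsSymm.trace_mul_self_le_offDiagMass {n : ℕ} {B : Matrix (Fin n) (Fin n) ℝ}
    (hB : B.IsSymm) (hdiag : ∀ i, B i i = 1) {c δ : ℝ} (hδ : 1 < δ)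
    (hoff : ∀ i j : Fin n, i < j → |B i j| ≤ c * ((j : ℝ) + 1) ^ (-δ)) :
    (B * B).trace ≤ n + offDiagMass c δ := by
  refine (hB.trace_mul_self_le hdiag (fun j => c ^ 2 * ((j : ℝ) + 1) ^ (-(2 * δ)))
    fun i j hij => ?_).trans ?_
  · calc B i j ^ 2 = |B i j| ^ 2 := (sq_abs _).symm
      _ ≤ (c * ((j : ℝ) + 1) ^ (-δ)) ^ 2 := pow_le_pow_left₀ (abs_nonneg _) (hoff i j hij) 2
      _ = c ^ 2 * ((j : ℝ) + 1) ^ (-(2 * δ)) := by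
        rw [mul_pow, ← rpow_mul_natCast (by positivity)]
        ring_nf
  · have := sum_range_mul_add_one_rpow_neg_le (p := 2 * δ) (by linarith) n
    simp only [mul_left_comm _ (c ^ 2), ← mul_sum]
    unfold offDiagMass
    nlinarith [sq_nonneg c]

namespace Matrix

variable {m n : Type*} [Fintype n]

noncomputable def rowNorm (A : Matrix m n ℝ) (i : m) : ℝ := √(∑ k, A i k ^ 2)

lemma rowNorm_nonneg (A : Matrix m n ℝ) (i : m) : 0 ≤ rowNorm A i := sqrt_nonneg _

noncomputable def normalizeRows (A : Matrix m n ℝ) : Matrix m n ℝ :=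
  of fun i k => A i k / rowNorm A i

lemma det_normalizeRows [DecidableEq n] (A : Matrix n n ℝ) :
    (normalizeRows A).det = A.det / ∏ i, rowNorm A i := by
  have : normalizeRows A = diagonal (fun i => (rowNorm A i)⁻¹) * A := by
    ext i k
    simp [normalizeRows, div_eq_inv_mul]
  rw [this, det_mul, det_diagonal, prod_inv_distrib, div_eq_inv_mul]

lemma normalizeRows_mul_transpose_apply (A : Matrix m n ℝ) (i j : m) :
    (normalizeRows A * (normalizeRows A)ᵀ) i j =
      (∑ k, A i k * A j k) / (rowNorm A i * rowNorm A j) := by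
  simp [normalizeRows, mul_apply, sum_div, div_mul_div_comm]

lemma normalizeRows_mul_transpose_apply_self (A : Matrix m n ℝ) {i : m}
    (hi : rowNorm A i ≠ 0) :
    (normalizeRows A * (normalizeRows A)ᵀ) i i = 1 := by
  have : ∑ k, A i k * A i k = rowNorm A i * rowNorm A i := by
    rw [rowNorm, mul_self_sqrt (sum_nonneg fun k _ => sq_nonneg (A i k))]
    simp only [sq]
  rw [normalizeRows_mul_transpose_apply, this, div_self (mul_ne_zero hi hi)]

lemma abs_normalizeRows_mul_transpose_apply (A : Matrix m n ℝ) (i j : m) :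
    |(normalizeRows A * (normalizeRows A)ᵀ) i j| =
      |∑ k, A i k * A j k| / (rowNorm A i * rowNorm A j) := by
  rw [normalizeRows_mul_transpose_apply, abs_div,
    abs_of_nonneg (mul_nonneg (rowNorm_nonneg A i) (rowNorm_nonneg A j))]

lemma isSymm_normalizeRows_mul_transpose (A : Matrix m n ℝ) :
    (normalizeRows A * (normalizeRows A)ᵀ).IsSymm := by
  rw [IsSymm, transpose_mul, transpose_transpose]

lemma trace_normalizeRows_mul_transpose [Fintype m] (A : Matrix m n ℝ)
    (h : ∀ i, rowNorm A i ≠ 0) :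
    (normalizeRows A * (normalizeRows A)ᵀ).trace = Fintype.card m := by
  simp [trace, normalizeRows_mul_transpose_apply_self A (h _)]

lemma isHermitian_normalizeRows_mul_transpose (A : Matrix m n ℝ) :
    (normalizeRows A * (normalizeRows A)ᵀ).IsHermitian := by
  simpa [conjTranspose_eq_transpose_of_trivial] using
    isHermitian_mul_conjTranspose_self (normalizeRows A)

end Matrix

/-- Lemma 2 of the paper: a quantitative lower bound on the determinant of a
symmetric matrix whose rows have norms at least `1` and whose normalized
off-diagonal inner products decay like `c₁ j^{-δ}` with `δ > 5/4` and `c₁`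
sufficiently small.  The constant `q ∈ (0,1)` is independent of the
dimension `n`. -/
theorem det_lower_bound_of_almost_orthogonal_rows
    (δ c₁ : ℝ) (hδ : 5 / 4 < δ) (hc₁ : 0 < c₁)
    (hsmall :
      0 < 1 - c₁ ^ 2 / (4 : ℝ) ^ δ -
        c₁ * (c₁ * Real.exp ((15 / 6) * c₁ ^ 2)) *
          (2 : ℝ) ^ ((5 : ℝ) / 2 - 2 * δ) / (2 * δ - 5 / 2)) :
    ∃ q ∈ Set.Ioo (0 : ℝ) 1, ∀ (n : ℕ) (A : Matrix (Fin n) (Fin n) ℝ),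
      A.IsSymm →
      (∀ i : Fin n, 1 ≤ Real.sqrt (∑ k, A i k ^ 2)) →
      (∀ i j : Fin n, i < j →
        |∑ k, A i k * A j k| /
            (Real.sqrt (∑ k, A i k ^ 2) * Real.sqrt (∑ k, A j k ^ 2)) ≤
          c₁ * ((j : ℝ) + 1) ^ (-δ)) →
      q * ∏ j, Real.sqrt (∑ k, A j k ^ 2) ≤ |A.det| := by
  set r := offDiagMass c₁ δ
  have hr : 0 < r := offDiagMass_pos hc₁.ne' (by linarith)
  have hr1 : r < 1 := offDiagMass_lt_one hδ hsmall
  have hsr : 0 < 1 - √r := sub_pos.2 ((sqrt_lt' one_pos).2 (by rwa [one_pow]))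
  refine ⟨exp (-(r / (1 - √r)) / 2), ⟨exp_pos _, exp_lt_one_iff.2 ?_⟩,
    fun n A _ hnorm hdecay => ?_⟩
  · linarith [div_pos hr hsr]
  have hnorm0 : ∀ i, Matrix.rowNorm A i ≠ 0 := fun i => (one_pos.trans_le (hnorm i)).ne'
  have htr := Matrix.trace_normalizeRows_mul_transpose A hnorm0
  have htr_sq := (Matrix.isSymm_normalizeRows_mul_transpose A).trace_mul_self_le_offDiagMass
    (fun i => Matrix.normalizeRows_mul_transpose_apply_self A (hnorm0 i)) (by linarith)
    fun i j hij => (Matrix.abs_normalizeRows_mul_transpose_apply A i j).trans_le (hdecay i j hij)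
  have hgram := (Matrix.isHermitian_normalizeRows_mul_transpose A).exp_neg_div_le_det hr1
    (by simpa using htr) (by simpa using htr_sq)
  rw [Matrix.det_mul, Matrix.det_transpose, Matrix.det_normalizeRows, ← sq] at hgram
  have hprod : 0 < ∏ j, Matrix.rowNorm A j := prod_pos fun j _ => one_pos.trans_le (hnorm j)
  have hq : |exp (-(r / (1 - √r)) / 2)| ≤ |A.det / ∏ j, Matrix.rowNorm A j| :=
    sq_le_sq.1 (by rwa [sq, ← exp_add, add_halves])
  rwa [abs_of_pos (exp_pos _), abs_div, abs_of_pos hprod, le_div_iff₀ hprod] at hq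
end

section
/- Let B be a symmetric positive n×n matrix with rows w_j of Euclidean norm at least 1, suppose |det B| ≥ q ∏_{j=1}^n ‖w_j‖ for some q ∈ (0,1), and let c ∈ ℝⁿ. Then the ratio −det([[B, c],[cᵀ, 0]]) / det(B) is at most (1/q) ‖c‖ · exp(‖c‖²/2). -/
open Finset Real Matrix

/-!
Hadamard's inequality bounds the determinant of the bordered matrix by the product of its row
lengths, which are `√(‖w_j‖² + c_j²)` for the first `n` rows and `‖c‖` for the last one. As
`‖w_j‖ ≥ 1`, the inequality `1 + t ≤ eᵗ` gives `√(‖w_j‖² + c_j²) ≤ ‖w_j‖ e^{c_j²/2}`, so the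
bordered determinant is at most `‖c‖ e^{‖c‖²/2} ∏ ‖w_j‖ ≤ q⁻¹ ‖c‖ e^{‖c‖²/2} |det B|`.

Hadamard's inequality itself reduces, after scaling the rows, to rows of length at most `1`.
Then `det (A Aᵀ) = ∏ λᵢ` with `λᵢ ≥ 0`, and `∏ λᵢ ≤ exp (∑ (λᵢ - 1)) = exp (tr (A Aᵀ) - n) ≤ 1`.
-/

namespace Matrix

variable {ι : Type*} [Fintype ι] [DecidableEq ι]

theorem PosSemidef.det_le_exp_trace_sub_card {G : Matrix ι ι ℝ} (hG : G.PosSemidef) :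
    G.det ≤ exp (G.trace - Fintype.card ι) := by
  calc G.det = ∏ i, hG.1.eigenvalues i := by simpa using hG.1.det_eq_prod_eigenvalues
    _ ≤ ∏ i, exp (hG.1.eigenvalues i - 1) :=
        prod_le_prod (fun i _ => hG.eigenvalues_nonneg i) fun i _ => by
          linarith [add_one_le_exp (hG.1.eigenvalues i - 1)]
    _ = exp (G.trace - Fintype.card ι) := by
        rw [← exp_sum, sum_sub_distrib, hG.1.trace_eq_sum_eigenvalues]
        simp

theorem abs_det_le_one_of_sum_sq_le_one {A : Matrix ι ι ℝ} (h : ∀ i, ∑ j, A i j ^ 2 ≤ 1) :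
    |A.det| ≤ 1 := by
  have htrace : (A * Aᵀ).trace ≤ Fintype.card ι := by
    simpa [trace, mul_apply, ← sq] using sum_le_sum fun i (_ : i ∈ univ) => h i
  have hG : (A * Aᵀ).PosSemidef := by
    simpa using posSemidef_self_mul_conjTranspose A
  have hdet : A.det ^ 2 = (A * Aᵀ).det := by rw [det_mul, det_transpose, sq]
  rw [← sq_le_one_iff_abs_le_one, hdet]
  exact hG.det_le_exp_trace_sub_card.trans (exp_le_one_iff.mpr (by linarith))

theorem abs_det_le_prod_sqrt_sum_sq (A : Matrix ι ι ℝ) :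
    |A.det| ≤ ∏ i, √(∑ j, A i j ^ 2) := by
  set r := fun i => √(∑ j, A i j ^ 2)
  have hsq : ∀ i, r i ^ 2 = ∑ j, A i j ^ 2 := fun i => sq_sqrt (sum_nonneg fun j _ => sq_nonneg _)
  by_cases hzero : ∃ i, r i = 0
  · obtain ⟨i, hi⟩ := hzero
    have hrow : ∀ j, A i j = 0 := fun j => by
      have := hsq i
      rw [hi, eq_comm, zero_pow two_ne_zero,
        sum_eq_zero_iff_of_nonneg fun j _ => sq_nonneg _] at this
      simpa using this j
    rw [det_eq_zero_of_row_eq_zero i hrow, abs_zero]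
    exact prod_nonneg fun i _ => sqrt_nonneg _
  push Not at hzero
  have hr : ∀ i, 0 < r i := fun i => (sqrt_nonneg _).lt_of_ne' (hzero i)
  have hunit : ∀ i, ∑ j, (of fun i j => (r i)⁻¹ * A i j) i j ^ 2 ≤ 1 := fun i => by
    simp only [of_apply, mul_pow, ← mul_sum, ← hsq, inv_pow,
      inv_mul_cancel₀ (pow_ne_zero 2 (hzero i)), le_refl]
  have := abs_det_le_one_of_sum_sq_le_one hunit
  rwa [det_mul_column, abs_mul, prod_inv_distrib, abs_inv, abs_of_pos (prod_pos fun i _ => hr i),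
    inv_mul_le_iff₀ (prod_pos fun i _ => hr i), mul_one] at this

theorem abs_det_fromBlocks_replicateCol_le (B : Matrix ι ι ℝ) (c : ι → ℝ) :
    |(fromBlocks B (replicateCol Unit c) (replicateRow Unit c) (0 : Matrix Unit Unit ℝ)).det| ≤
      (∏ j, √((∑ k, B j k ^ 2) + c j ^ 2)) * √(∑ i, c i ^ 2) := by
  refine (abs_det_le_prod_sqrt_sum_sq _).trans_eq ?_
  simp [Fintype.prod_sum_type, Fintype.sum_sum_type]

end Matrix

namespace Real

theorem add_le_mul_exp {a s : ℝ} (ha : 1 ≤ a) (hs : 0 ≤ s) : a + s ≤ a * exp s := by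
  nlinarith [add_one_le_exp s]

theorem sqrt_add_le_sqrt_mul_exp_half {a s : ℝ} (ha : 1 ≤ a) (hs : 0 ≤ s) :
    √(a + s) ≤ √a * exp (s / 2) := by
  rw [exp_half, ← sqrt_mul (by linarith)]
  exact sqrt_le_sqrt (add_le_mul_exp ha hs)

theorem prod_sqrt_add_sq_le {ι : Type*} [Fintype ι] {a c : ι → ℝ} (ha : ∀ j, 1 ≤ a j) :
    ∏ j, √(a j + c j ^ 2) ≤ (∏ j, √(a j)) * exp ((∑ j, c j ^ 2) / 2) := by
  rw [sum_div, exp_sum, ← prod_mul_distrib]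
  exact prod_le_prod (fun j _ => sqrt_nonneg _)
    fun j _ => sqrt_add_le_sqrt_mul_exp_half (ha j) (sq_nonneg _)

end Real

theorem bordered_determinant_ratio_bound_general
    (n : ℕ) (B : Matrix (Fin n) (Fin n) ℝ) (c : Fin n → ℝ) (q : ℝ)
    (hrow : ∀ j : Fin n, 1 ≤ Real.sqrt (∑ k, B j k ^ 2))
    (hq : q ∈ Set.Ioo (0 : ℝ) 1)
    (hdet : q * ∏ j, Real.sqrt (∑ k, B j k ^ 2) ≤ |B.det|) :
    -(Matrix.fromBlocks B (Matrix.replicateCol Unit c) (Matrix.replicateRow Unit c)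
          (0 : Matrix Unit Unit ℝ)).det / B.det ≤
      (1 / q) * Real.sqrt (∑ i, c i ^ 2) *
        Real.exp ((∑ i, c i ^ 2) / 2) := by
  set M := fromBlocks B (replicateCol Unit c) (replicateRow Unit c) (0 : Matrix Unit Unit ℝ)
  set P := ∏ j, √(∑ k, B j k ^ 2)
  set S := ∑ i, c i ^ 2
  have hP : 0 < P := prod_pos fun j _ => one_pos.trans_le (hrow j)
  have hM : |M.det| ≤ P * exp (S / 2) * √S :=
    (abs_det_fromBlocks_replicateCol_le B c).trans <| mul_le_mul_of_nonneg_right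
      (prod_sqrt_add_sq_le fun j => one_le_sqrt.mp (hrow j)) (sqrt_nonneg _)
  calc -M.det / B.det ≤ |M.det| / |B.det| := by
        rw [neg_div, ← abs_div]
        exact neg_le_abs _
    _ ≤ P * exp (S / 2) * √S / (q * P) := div_le_div₀ (by positivity) hM (mul_pos hq.1 hP) hdet
    _ = 1 / q * √S * exp (S / 2) := by field_simp

/-- Corollary after Lemma 2: bound on the ratio of the bordered determinant
`det [[B, c],[cᵀ, 0]]` to `det B`, for a symmetric matrix `B` whose rows have
Euclidean norm at least `1` and whose determinant satisfies the lower bound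
`|det B| ≥ q ∏ ‖w_j‖`. -/
theorem bordered_determinant_ratio_bound
    (n : ℕ) (B : Matrix (Fin n) (Fin n) ℝ) (c : Fin n → ℝ) (q : ℝ)
    (hB : B.IsSymm) (hBdet : B.det ≠ 0)
    (hrow : ∀ j : Fin n, 1 ≤ Real.sqrt (∑ k, B j k ^ 2))
    (hq : q ∈ Set.Ioo (0 : ℝ) 1)
    (hdet : q * ∏ j, Real.sqrt (∑ k, B j k ^ 2) ≤ |B.det|) :
    -(Matrix.fromBlocks B (Matrix.replicateCol Unit c) (Matrix.replicateRow Unit c)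
          (0 : Matrix Unit Unit ℝ)).det / B.det ≤
      (1 / q) * Real.sqrt (∑ i, c i ^ 2) *
        Real.exp ((∑ i, c i ^ 2) / 2) :=
  bordered_determinant_ratio_bound_general n B c q hrow hq hdet
end

section
/- Let Q be differentiable on (x₀, ∞) with Q(z)/z ≤ (1/A) Q'(z) for some A > 1 and Q increasing and positive. Then for x₀ < a < b: ∫_a^b Q(z)²/z² dz ≤ (1/(2A−1)) (Q(b)²/b − Q(a)²/a). -/
open Real intervalIntegral Set

/-
The function `Q²/z` has derivative `2QQ'/z − Q²/z²`, and the growth condition `A·Q/z ≤ Q'`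
turns this into `(2A − 1)·Q²/z² ≤ (Q²/z)'`. Integrating this pointwise bound over `[a, b]`
gives the estimate.
-/

theorem integral_le_sub_of_hasDerivAt_of_continuousOn_of_le {f g g' : ℝ → ℝ} {a b : ℝ}
    (hab : a ≤ b) (hg : ∀ x ∈ Icc a b, HasDerivAt g (g' x) x) (hf : ContinuousOn f (Icc a b))
    (hfg : ∀ x ∈ Ioo a b, f x ≤ g' x) : (∫ x in a..b, f x) ≤ g b - g a :=
  integral_le_sub_of_hasDeriv_right_of_le hab
    (fun x hx => (hg x hx).continuousAt.continuousWithinAt)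
    (fun x hx => (hg x (Ioo_subset_Icc_self hx)).hasDerivWithinAt)
    hf.integrableOn_Icc hfg

theorem hasDerivAt_sq_div_id {Q : ℝ → ℝ} {q z : ℝ} (hQ : HasDerivAt Q q z) (hz : z ≠ 0) :
    HasDerivAt (fun x => Q x ^ 2 / x) (2 * Q z * q / z - Q z ^ 2 / z ^ 2) z :=
  ((hQ.fun_pow 2).fun_div (hasDerivAt_id' z) hz).congr_deriv (by field_simp; ring)

theorem sq_div_sq_le_of_div_le_mul_deriv {A z Q q : ℝ} (hA : 1 / 2 < A) (hz : 0 < z)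
    (hQ : 0 ≤ Q) (h : Q / z ≤ 1 / A * q) :
    Q ^ 2 / z ^ 2 ≤ 1 / (2 * A - 1) * (2 * Q * q / z - Q ^ 2 / z ^ 2) := by
  set r := Q / z with hr
  have hr0 : 0 ≤ r := div_nonneg hQ hz.le
  have hAr : A * r ≤ q := by
    rwa [one_div_mul_eq_div, le_div_iff₀ (by linarith), mul_comm] at h
  have hrq : A * r ^ 2 ≤ q * r := by nlinarith
  have h2Q : 2 * Q * q / z = 2 * q * r := by rw [hr]; ring
  rw [h2Q, ← div_pow, one_div_mul_eq_div, le_div_iff₀ (by linarith)]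
  nlinarith

theorem freud_exponent_integral_bound_general
    (Q Q' : ℝ → ℝ) (A x₀ a b : ℝ)
    (hA : 1 < A) (hx₀ : 0 ≤ x₀) (hab : x₀ < a) (hab' : a < b)
    (hderiv : ∀ z ∈ Set.Ioi x₀, HasDerivAt Q (Q' z) z)
    (hQpos : ∀ z ∈ Set.Ioi x₀, 0 < Q z)
    (hQratio : ∀ z ∈ Set.Ioi x₀, Q z / z ≤ (1 / A) * Q' z) :
    (∫ z in a..b, Q z ^ 2 / z ^ 2) ≤
      (1 / (2 * A - 1)) * (Q b ^ 2 / b - Q a ^ 2 / a) := by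
  have hIcc : Icc a b ⊆ Ioi x₀ := fun z hz => hab.trans_le hz.1
  have hpos : ∀ z ∈ Icc a b, 0 < z := fun z hz => hx₀.trans_lt (hIcc hz)
  have hprim : ∀ z ∈ Icc a b, HasDerivAt (fun x => 1 / (2 * A - 1) * (Q x ^ 2 / x))
      (1 / (2 * A - 1) * (2 * Q z * Q' z / z - Q z ^ 2 / z ^ 2)) z := fun z hz =>
    (hasDerivAt_sq_div_id (hderiv z (hIcc hz)) (hpos z hz).ne').const_mul _
  have hcont : ContinuousOn (fun z => Q z ^ 2 / z ^ 2) (Icc a b) :=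
    ((HasDerivAt.continuousOn fun z hz => hderiv z (hIcc hz)).pow 2).div (continuousOn_id.pow 2)
      fun z hz => pow_ne_zero 2 (hpos z hz).ne'
  calc (∫ z in a..b, Q z ^ 2 / z ^ 2)
      ≤ 1 / (2 * A - 1) * (Q b ^ 2 / b) - 1 / (2 * A - 1) * (Q a ^ 2 / a) :=
        integral_le_sub_of_hasDerivAt_of_continuousOn_of_le hab'.le hprim hcont fun z hz =>
          have hz : z ∈ Ioi x₀ := hIcc (Ioo_subset_Icc_self hz)
          sq_div_sq_le_of_div_le_mul_deriv (by linarith) (hx₀.trans_lt hz) (hQpos z hz).le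
            (hQratio z hz)
    _ = 1 / (2 * A - 1) * (Q b ^ 2 / b - Q a ^ 2 / a) := by ring

/-- The integration-by-parts estimate from Lemma 8 (`S₁₃`): if `Q` is positive,
increasing and satisfies `Q(z)/z ≤ (1/A) Q'(z)` on `(x₀,∞)` with `A > 1`, then
`∫_a^b Q(z)²/z² dz ≤ (1/(2A-1)) (Q(b)²/b − Q(a)²/a)` for `x₀ < a < b`. -/
theorem freud_exponent_integral_bound
    (Q Q' : ℝ → ℝ) (A x₀ a b : ℝ)
    (hA : 1 < A) (hx₀ : 0 ≤ x₀) (hab : x₀ < a) (hab' : a < b)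
    (hderiv : ∀ z ∈ Set.Ioi x₀, HasDerivAt Q (Q' z) z)
    (hQpos : ∀ z ∈ Set.Ioi x₀, 0 < Q z)
    (hQmono : MonotoneOn Q (Set.Ioi x₀))
    (hQratio : ∀ z ∈ Set.Ioi x₀, Q z / z ≤ (1 / A) * Q' z) :
    (∫ z in a..b, Q z ^ 2 / z ^ 2) ≤
      (1 / (2 * A - 1)) * (Q b ^ 2 / b - Q a ^ 2 / a) :=
  freud_exponent_integral_bound_general Q Q' A x₀ a b hA hx₀ hab hab' hderiv hQpos hQratio
end
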